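/- Every inductive groupoid is pseudoassociative: for all g, h, k, the pseudoproduct (g∗h)∗k is defined if and only if g∗(h∗k) is defined, and in that case they coincide. -/
import Mathlib


universe u v w

/-- An ordered groupoid: a set with a partial multiplication (given by a total
function `mul` together with a definedness predicate `comp`), inversion, and a
compatible partial order with unique restrictions and corestrictions
(conditions (OG1)-(OG3*)). Identities are the elements `e` with `e⁻¹e = e`;
`d g = g⁻¹g`, `r g = gg⁻¹`. -/
structure OrderedGroupoid (G : Type u) [PartialOrder G] where
  mul : G → G → G
  inv : G → G
  comp : G → G → Prop
  comp_inv_self : ∀ g, comp (inv g) g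
  comp_self_inv : ∀ g, comp g (inv g)
  comp_iff : ∀ g h, comp g h ↔ mul (inv g) g = mul h (inv h)
  assoc : ∀ g h k, comp g h → comp h k → mul (mul g h) k = mul g (mul h k)
  comp_mul_left : ∀ g h k, comp g h → comp h k → comp (mul g h) k
  comp_mul_right : ∀ g h k, comp g h → comp h k → comp g (mul h k)
  id_left : ∀ g, mul (mul g (inv g)) g = g
  id_right : ∀ g, mul g (mul (inv g) g) = g
  inv_inv : ∀ g, inv (inv g) = g
  inv_mul : ∀ g h, comp g h → inv (mul g h) = mul (inv h) (inv g)
  /-- (OG1) -/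
  inv_le_inv : ∀ g h, g ≤ h → inv g ≤ inv h
  /-- (OG2) -/
  mul_le_mul : ∀ g h k l, g ≤ h → k ≤ l → comp g k → comp h l → mul g k ≤ mul h l
  /-- restriction `(g|e)` -/
  rest : G → G → G
  rest_le : ∀ g e, mul (inv e) e = e → e ≤ mul (inv g) g → rest g e ≤ g
  rest_d : ∀ g e, mul (inv e) e = e → e ≤ mul (inv g) g →
    mul (inv (rest g e)) (rest g e) = e
  rest_unique : ∀ g e k, mul (inv e) e = e → e ≤ mul (inv g) g → k ≤ g →
    mul (inv k) k = e → k = rest g e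
  /-- corestriction `(e|g)` -/
  corest : G → G → G
  corest_le : ∀ e g, mul (inv e) e = e → e ≤ mul g (inv g) → corest e g ≤ g
  corest_r : ∀ e g, mul (inv e) e = e → e ≤ mul g (inv g) →
    mul (corest e g) (inv (corest e g)) = e
  corest_unique : ∀ e g k, mul (inv e) e = e → e ≤ mul g (inv g) → k ≤ g →
    mul k (inv k) = e → k = corest e g

namespace OrderedGroupoid

variable {G : Type u} [PartialOrder G]

/-- the domain identity `d g = g⁻¹ g` -/
def d (O : OrderedGroupoid G) (g : G) : G := O.mul (O.inv g) g

/-- the range identity `r g = g g⁻¹` -/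
def r (O : OrderedGroupoid G) (g : G) : G := O.mul g (O.inv g)

/-- `e` is an identity of the groupoid -/
def IsId (O : OrderedGroupoid G) (e : G) : Prop := O.d e = e

/-- `m` is the meet of the identities `e` and `f` in the order on identities. -/
def IsMeet (O : OrderedGroupoid G) (e f m : G) : Prop :=
  O.IsId m ∧ m ≤ e ∧ m ≤ f ∧ ∀ w, O.IsId w → w ≤ e → w ≤ f → w ≤ m

/-- the pseudoproduct `g ∗ h = (g | d g ∧ r h)·(d g ∧ r h | h)`, given a witness `m`
for the meet `d g ∧ r h`. -/
def pseudo (O : OrderedGroupoid G) (g h m : G) : G :=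
  O.mul (O.rest g m) (O.corest m h)

/-- `G` is inductive: its identities form a meet semilattice. -/
def Inductive (O : OrderedGroupoid G) : Prop :=
  ∀ e f, O.IsId e → O.IsId f → ∃ m, O.IsMeet e f m

/-- `G` is pseudoassociative: `(g∗h)∗k` is defined iff `g∗(h∗k)` is. -/
def Pseudoassoc (O : OrderedGroupoid G) : Prop :=
  ∀ g h k,
    (∃ m1 m2, O.IsMeet (O.d g) (O.r h) m1 ∧
      O.IsMeet (O.d (O.pseudo g h m1)) (O.r k) m2) ↔
    (∃ m3 m4, O.IsMeet (O.d h) (O.r k) m3 ∧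
      O.IsMeet (O.d g) (O.r (O.pseudo h k m3)) m4)

end OrderedGroupoid

/-- `T` is a (two-sided) ideal of the subring with carrier `R`. -/
def IsIdealIn {A : Type v} [Ring A] (T R : Set A) : Prop :=
  T ⊆ R ∧ (0 : A) ∈ T ∧ (∀ a b, a ∈ T → b ∈ T → a + b ∈ T) ∧
    (∀ a, a ∈ T → -a ∈ T) ∧ ∀ x a, x ∈ R → a ∈ T → x * a ∈ T ∧ a * x ∈ T

/-- A partial ordered (P.O.) action `α = (A_g, α_g)` of an ordered groupoid `G` on
a ring `A`: ideals `A_{r g} ◁ A`, `A_g ◁ A_{r g}` and ring isomorphisms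
`α_g : A_{g⁻¹} → A_g` satisfying (P1)-(P3) and (PO). -/
structure POAction {G : Type u} [PartialOrder G] (O : OrderedGroupoid G)
    (A : Type v) [Ring A] where
  S : G → Set A
  act : G → A → A
  ideal_r : ∀ g, IsIdealIn (S (O.r g)) Set.univ
  ideal_g : ∀ g, IsIdealIn (S g) (S (O.r g))
  bijOn : ∀ g, Set.BijOn (act g) (S (O.inv g)) (S g)
  map_add : ∀ g a b, a ∈ S (O.inv g) → b ∈ S (O.inv g) →
    act g (a + b) = act g a + act g b
  map_mul : ∀ g a b, a ∈ S (O.inv g) → b ∈ S (O.inv g) →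
    act g (a * b) = act g a * act g b
  /-- (P1): `α_e = id` on `A_e` for identities -/
  p1_id : ∀ e, O.IsId e → ∀ a ∈ S e, act e a = a
  /-- (P1): `A = Σ_e A_e` -/
  p1_sum : AddSubgroup.closure {a : A | ∃ e, O.IsId e ∧ a ∈ S e} = ⊤
  /-- (P2) -/
  p2 : ∀ g h, O.comp g h → ∀ x, x ∈ S (O.inv g) → x ∈ S h →
    act (O.inv h) x ∈ S (O.inv (O.mul g h))
  /-- (P3) -/
  p3 : ∀ g h, O.comp g h → ∀ a, a ∈ S (O.inv h) → act h a ∈ S (O.inv g) →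
    act g (act h a) = act (O.mul g h) a
  /-- (PO) -/
  po_subset : ∀ g h, g ≤ h → S g ⊆ S h
  po_act : ∀ g h, g ≤ h → ∀ a ∈ S (O.inv g), act h a = act g a

namespace POAction

variable {G : Type u} [PartialOrder G] {O : OrderedGroupoid G}
variable {A : Type v} [Ring A]

/-- a global action: `A_g = A_{r g}`. -/
def IsGlobal (α : POAction O A) : Prop := ∀ g, α.S g = α.S (O.r g)

/-- a strong P.O. action: `A_{(e|g)} = A_e ∩ A_g` for identities `e ≤ r g`. -/
def IsStrong (α : POAction O A) : Prop :=
  ∀ g e, O.IsId e → e ≤ O.r g → α.S (O.corest e g) = α.S e ∩ α.S g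

end POAction

/-- the set `T` is generated, as an ideal, by a central idempotent. -/
def GenByCentralIdem {A : Type v} [Ring A] (T : Set A) : Prop :=
  ∃ u : A, (∀ x : A, u * x = x * u) ∧ u * u = u ∧ T = {a : A | u * a = a}

namespace POAction

variable {G : Type u} [PartialOrder G] {O : OrderedGroupoid G}
variable {A : Type v} [Ring A]

/-- `α` is unital: every `A_g` is generated by a central idempotent of `A`. -/
def IsUnital (α : POAction O A) : Prop := ∀ g, GenByCentralIdem (α.S g)

/-- `α` is preunital: every `A_e`, `e` an identity, is generated by a central
idempotent of `A`. -/
def Preunital (α : POAction O A) : Prop :=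
  ∀ e, O.IsId e → GenByCentralIdem (α.S e)

end POAction

/-- Equivalence of two P.O. actions of `G` (on rings `A` and `C`): a family of
ring isomorphisms `φ_e : A_e → C_e` with `φ_{r g}(A_g) = C_g` and
`φ_{r g} ∘ α_g = γ_g ∘ φ_{d g}` on `A_{g⁻¹}`. -/
def POAction.Equivalent {G : Type u} [PartialOrder G] {O : OrderedGroupoid G}
    {A : Type v} [Ring A] {C : Type w} [Ring C]
    (α : POAction O A) (γ : POAction O C) : Prop :=
  ∃ φ : G → A → C,
    (∀ e, O.IsId e → Set.BijOn (φ e) (α.S e) (γ.S e) ∧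
      ∀ a b, a ∈ α.S e → b ∈ α.S e →
        φ e (a + b) = φ e a + φ e b ∧ φ e (a * b) = φ e a * φ e b) ∧
    (∀ g, φ (O.r g) '' α.S g = γ.S g) ∧
    ∀ g a, a ∈ α.S (O.inv g) → φ (O.r g) (α.act g a) = γ.act g (φ (O.d g) a)

/-- An (ordered) globalization of a P.O. action `α` of `G` on `A`: an ordered
global action `β` of `G` on a ring `B` together with ring monomorphisms
`φ_e : A_e → B_e` satisfying conditions (i)-(iv). -/
structure Globalization {G : Type u} [PartialOrder G] (O : OrderedGroupoid G)
    {A : Type v} [Ring A] (α : POAction O A) where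
  B : Type v
  [ringB : Ring B]
  β : POAction O B
  global : β.IsGlobal
  φ : G → A → B
  φ_inj : ∀ e, O.IsId e → Set.InjOn (φ e) (α.S e)
  φ_hom : ∀ e, O.IsId e → ∀ a b, a ∈ α.S e → b ∈ α.S e →
    φ e (a + b) = φ e a + φ e b ∧ φ e (a * b) = φ e a * φ e b
  /-- (i): `φ_e(A_e)` is an ideal of `B_e` -/
  cond_i : ∀ e, O.IsId e → IsIdealIn (φ e '' α.S e) (β.S e)
  /-- (ii) -/
  cond_ii : ∀ g, φ (O.r g) '' α.S g =
    (φ (O.r g) '' α.S (O.r g)) ∩ (β.act g '' (φ (O.d g) '' α.S (O.d g)))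
  /-- (iii) -/
  cond_iii : ∀ g a, a ∈ α.S (O.inv g) →
    β.act g (φ (O.d g) a) = φ (O.r g) (α.act g a)
  /-- (iv): `B_g = Σ_{r h ≤ r g} β_h(φ_{d h}(A_{d h}))` -/
  cond_iv : ∀ g, β.S g = ↑(AddSubgroup.closure
    {b : B | ∃ h, O.r h ≤ O.r g ∧ ∃ a ∈ α.S (O.d h), b = β.act h (φ (O.d h) a)})

namespace Globalization

variable {G : Type u} [PartialOrder G] {O : OrderedGroupoid G}
variable {A : Type v} [Ring A] {α : POAction O A}

attribute [instance] Globalization.ringB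

/-- a minimal globalization: `B_g = Σ_{r h = r g} β_h(φ_{d h}(A_{d h}))`. -/
def IsMinimal (Γ : Globalization O α) : Prop :=
  ∀ g, Γ.β.S g = ↑(AddSubgroup.closure
    {b : Γ.B | ∃ h, O.r h = O.r g ∧ ∃ a ∈ α.S (O.d h), b = Γ.β.act h (Γ.φ (O.d h) a)})

/-- two globalizations are equivalent when the underlying global actions are
equivalent P.O. actions. -/
def Equiv (Γ Γ' : Globalization O α) : Prop := Γ.β.Equivalent Γ'.β

end Globalization

namespace OrderedGroupoid

variable {G : Type u} [PartialOrder G] (O : OrderedGroupoid G)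

lemma comp_of {a b : G} (h : O.d a = O.r b) : O.comp a b := (O.comp_iff a b).mpr h

lemma d_eq_r {a b : G} (h : O.comp a b) : O.d a = O.r b := (O.comp_iff a b).mp h

lemma inv_d (g : G) : O.inv (O.d g) = O.d g := by
  show O.inv (O.mul (O.inv g) g) = _
  rw [O.inv_mul _ _ (O.comp_inv_self g), O.inv_inv]; rfl

lemma isId_d (g : G) : O.IsId (O.d g) := by
  show O.mul (O.inv (O.d g)) (O.d g) = O.d g
  rw [O.inv_d]
  show O.mul (O.mul (O.inv g) g) (O.mul (O.inv g) g) = O.mul (O.inv g) g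
  rw [O.assoc _ _ _ (O.comp_inv_self g)
      (O.comp_mul_right g (O.inv g) g (O.comp_self_inv g) (O.comp_inv_self g)),
    O.id_right]

lemma d_inv (g : G) : O.d (O.inv g) = O.r g := by
  show O.mul (O.inv (O.inv g)) (O.inv g) = O.mul g (O.inv g)
  rw [O.inv_inv]

lemma r_inv (g : G) : O.r (O.inv g) = O.d g := by
  show O.mul (O.inv g) (O.inv (O.inv g)) = O.mul (O.inv g) g
  rw [O.inv_inv]

lemma isId_r (g : G) : O.IsId (O.r g) := by
  have := O.isId_d (O.inv g)
  rwa [O.d_inv] at this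

lemma comp_inv {g h : G} (hc : O.comp g h) : O.comp (O.inv h) (O.inv g) :=
  O.comp_of (by rw [O.d_inv, O.r_inv, O.d_eq_r hc])

lemma d_mul {g h : G} (hc : O.comp g h) : O.d (O.mul g h) = O.d h := by
  have h1 : O.comp (O.inv g) (O.mul g h) :=
    O.comp_mul_right (O.inv g) g h (O.comp_inv_self g) hc
  show O.mul (O.inv (O.mul g h)) (O.mul g h) = O.mul (O.inv h) h
  rw [O.inv_mul g h hc,
    O.assoc (O.inv h) (O.inv g) (O.mul g h) (O.comp_inv hc) h1,
    ← O.assoc (O.inv g) g h (O.comp_inv_self g) hc]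
  have hd : O.mul (O.inv g) g = O.mul h (O.inv h) := O.d_eq_r hc
  rw [hd, O.id_left]

lemma r_mul {g h : G} (hc : O.comp g h) : O.r (O.mul g h) = O.r g := by
  rw [← O.d_inv, O.inv_mul g h hc, O.d_mul (O.comp_inv hc), O.d_inv]

lemma d_le_d {x g : G} (h : x ≤ g) : O.d x ≤ O.d g :=
  O.mul_le_mul _ _ _ _ (O.inv_le_inv _ _ h) h (O.comp_inv_self x) (O.comp_inv_self g)

lemma r_le_r {x g : G} (h : x ≤ g) : O.r x ≤ O.r g :=
  O.mul_le_mul _ _ _ _ h (O.inv_le_inv _ _ h) (O.comp_self_inv x) (O.comp_self_inv g)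

lemma rest_eq_of_le {x g : G} (h : x ≤ g) : O.rest g (O.d x) = x :=
  (O.rest_unique g (O.d x) x (O.isId_d x) (O.d_le_d h) h rfl).symm

lemma corest_eq_of_le {x g : G} (h : x ≤ g) : O.corest (O.r x) g = x :=
  (O.corest_unique (O.r x) g x (O.isId_r x) (O.r_le_r h) h rfl).symm

lemma rest_of_le {x g f : G} (hx : x ≤ g) (hf : O.IsId f) (hfd : f ≤ O.d x) :
    O.rest x f = O.rest g f :=
  O.rest_unique g f (O.rest x f) hf (hfd.trans (O.d_le_d hx))
    ((O.rest_le x f hf hfd).trans hx) (O.rest_d x f hf hfd)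

lemma corest_of_le {x g f : G} (hx : x ≤ g) (hf : O.IsId f) (hfr : f ≤ O.r x) :
    O.corest f x = O.corest f g :=
  O.corest_unique f g (O.corest f x) hf (hfr.trans (O.r_le_r hx))
    ((O.corest_le f x hf hfr).trans hx) (O.corest_r f x hf hfr)

lemma le_rest {v g f : G} (hv : v ≤ g) (hf : O.IsId f) (hfd : f ≤ O.d g)
    (hdv : O.d v ≤ f) : v ≤ O.rest g f := by
  have hdf : O.d (O.rest g f) = f := O.rest_d g f hf hfd
  have h1 : O.rest (O.rest g f) (O.d v) = O.rest g (O.d v) :=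
    O.rest_of_le (O.rest_le g f hf hfd) (O.isId_d v) (by rw [hdf]; exact hdv)
  have h2 : O.rest g (O.d v) = v := O.rest_eq_of_le hv
  rw [← h2, ← h1]
  exact O.rest_le _ _ (O.isId_d v)
    (show O.d v ≤ O.d (O.rest g f) by rw [hdf]; exact hdv)

lemma le_corest {v g e : G} (hv : v ≤ g) (he : O.IsId e) (hle : e ≤ O.r g)
    (hrv : O.r v ≤ e) : v ≤ O.corest e g := by
  have hre : O.r (O.corest e g) = e := O.corest_r e g he hle
  have h1 : O.corest (O.r v) (O.corest e g) = O.corest (O.r v) g :=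
    O.corest_of_le (O.corest_le e g he hle) (O.isId_r v) (by rw [hre]; exact hrv)
  have h2 : O.corest (O.r v) g = v := O.corest_eq_of_le hv
  rw [← h2, ← h1]
  exact O.corest_le _ _ (O.isId_r v)
    (show O.r v ≤ O.r (O.corest e g) by rw [hre]; exact hrv)

lemma rest_mul {x y f : G} (hc : O.comp x y) (hf : O.IsId f) (hfd : f ≤ O.d y) :
    O.rest (O.mul x y) f = O.mul (O.rest x (O.r (O.rest y f))) (O.rest y f) := by
  set y' := O.rest y f with hy'def
  have hy' : y' ≤ y := O.rest_le y f hf hfd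
  have hdy' : O.d y' = f := O.rest_d y f hf hfd
  have hj : O.r y' ≤ O.d x := by rw [O.d_eq_r hc]; exact O.r_le_r hy'
  set x' := O.rest x (O.r y') with hx'def
  have hx' : x' ≤ x := O.rest_le x _ (O.isId_r y') hj
  have hdx' : O.d x' = O.r y' := O.rest_d x _ (O.isId_r y') hj
  have hc' : O.comp x' y' := O.comp_of hdx'
  refine (O.rest_unique (O.mul x y) f (O.mul x' y') hf ?_ ?_ ?_).symm
  · show f ≤ O.d (O.mul x y)
    rw [O.d_mul hc]; exact hfd
  · exact O.mul_le_mul x' x y' y hx' hy' hc' hc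
  · show O.d (O.mul x' y') = f
    rw [O.d_mul hc', hdy']

lemma corest_mul {x y f : G} (hc : O.comp x y) (hf : O.IsId f) (hfr : f ≤ O.r x) :
    O.corest f (O.mul x y) =
      O.mul (O.corest f x) (O.corest (O.d (O.corest f x)) y) := by
  set x' := O.corest f x with hx'def
  have hx' : x' ≤ x := O.corest_le f x hf hfr
  have hrx' : O.r x' = f := O.corest_r f x hf hfr
  have hn : O.d x' ≤ O.r y := by rw [← O.d_eq_r hc]; exact O.d_le_d hx'
  set y' := O.corest (O.d x') y with hy'def
  have hy' : y' ≤ y := O.corest_le _ y (O.isId_d x') hn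
  have hry' : O.r y' = O.d x' := O.corest_r _ y (O.isId_d x') hn
  have hc' : O.comp x' y' := O.comp_of hry'.symm
  refine (O.corest_unique f (O.mul x y) (O.mul x' y') hf ?_ ?_ ?_).symm
  · show f ≤ O.r (O.mul x y)
    rw [O.r_mul hc]; exact hfr
  · exact O.mul_le_mul x' x y' y hx' hy' hc' hc
  · show O.r (O.mul x' y') = f
    rw [O.r_mul hc', hrx']

lemma meet_unique {e f m m' : G} (h : O.IsMeet e f m) (h' : O.IsMeet e f m') :
    m = m' :=
  le_antisymm (h'.2.2.2 m h.1 h.2.1 h.2.2.1) (h.2.2.2 m' h'.1 h'.2.1 h'.2.2.1)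

end OrderedGroupoid

/-- every inductive groupoid is pseudoassociative; moreover all
pseudoproducts exist and `(g∗h)∗k = g∗(h∗k)` (for any witnesses of the
relevant meets). -/
theorem stmt9 {G : Type u} [PartialOrder G] (O : OrderedGroupoid G)
    (hInd : O.Inductive) :
    O.Pseudoassoc ∧
    (∀ g h : G, ∃ m, O.IsMeet (O.d g) (O.r h) m) ∧
    ∀ g h k m1 m2 m3 m4,
      O.IsMeet (O.d g) (O.r h) m1 →
      O.IsMeet (O.d (O.pseudo g h m1)) (O.r k) m2 →
      O.IsMeet (O.d h) (O.r k) m3 →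
      O.IsMeet (O.d g) (O.r (O.pseudo h k m3)) m4 →
      O.pseudo (O.pseudo g h m1) k m2 = O.pseudo g (O.pseudo h k m3) m4 := by
  have hmeet : ∀ g h : G, ∃ m, O.IsMeet (O.d g) (O.r h) m :=
    fun g h => hInd _ _ (O.isId_d g) (O.isId_r h)
  refine ⟨?_, hmeet, ?_⟩
  · intro g h k
    constructor
    · intro _
      obtain ⟨m3, hm3⟩ := hmeet h k
      obtain ⟨m4, hm4⟩ := hmeet g (O.pseudo h k m3)
      exact ⟨m3, m4, hm3, hm4⟩
    · intro _
      obtain ⟨m1, hm1⟩ := hmeet g h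
      obtain ⟨m2, hm2⟩ := hmeet (O.pseudo g h m1) k
      exact ⟨m1, m2, hm1, hm2⟩
  · intro g h k e f i f4 he hf hi hf4
    -- setup for the left-hand side
    set a := O.rest g e with hadef
    set b := O.corest e h with hbdef
    have heId := he.1
    have heg : e ≤ O.d g := he.2.1
    have heh : e ≤ O.r h := he.2.2.1
    have ha : a ≤ g := O.rest_le g e heId heg
    have hda : O.d a = e := O.rest_d g e heId heg
    have hb : b ≤ h := O.corest_le e h heId heh
    have hrb : O.r b = e := O.corest_r e h heId heh
    have hcab : O.comp a b := O.comp_of (by rw [hda, hrb])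
    have hp : O.pseudo g h e = O.mul a b := rfl
    have hdp : O.d (O.pseudo g h e) = O.d b := by rw [hp, O.d_mul hcab]
    have hfId := hf.1
    have hfdb : f ≤ O.d b := by rw [← hdp]; exact hf.2.1
    have hfk : f ≤ O.r k := hf.2.2.1
    set z := O.rest b f with hzdef
    have hz : z ≤ b := O.rest_le b f hfId hfdb
    have hdz : O.d z = f := O.rest_d b f hfId hfdb
    have hrz_e : O.r z ≤ e := by rw [← hrb]; exact O.r_le_r hz
    -- setup for the right-hand side
    have hiId := hi.1
    have hih : i ≤ O.d h := hi.2.1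
    have hik : i ≤ O.r k := hi.2.2.1
    set c := O.rest h i with hcdef
    set dk := O.corest i k with hdkdef
    have hc : c ≤ h := O.rest_le h i hiId hih
    have hdc : O.d c = i := O.rest_d h i hiId hih
    have hdk : dk ≤ k := O.corest_le i k hiId hik
    have hrdk : O.r dk = i := O.corest_r i k hiId hik
    have hccdk : O.comp c dk := O.comp_of (by rw [hdc, hrdk])
    have hq : O.pseudo h k i = O.mul c dk := rfl
    have hrq : O.r (O.pseudo h k i) = O.r c := by rw [hq, O.r_mul hccdk]
    have hf4Id := hf4.1
    have hf4g : f4 ≤ O.d g := hf4.2.1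
    have hf4c : f4 ≤ O.r c := by rw [← hrq]; exact hf4.2.2.1
    set z' := O.corest f4 c with hz'def
    have hz' : z' ≤ c := O.corest_le f4 c hf4Id hf4c
    have hrz' : O.r z' = f4 := O.corest_r f4 c hf4Id hf4c
    -- z ≤ z'
    have hzh : z ≤ h := hz.trans hb
    have hdz_i : O.d z ≤ i :=
      hi.2.2.2 _ (O.isId_d z) (O.d_le_d hzh) (by rw [hdz]; exact hfk)
    have hzc : z ≤ c := O.le_rest hzh hiId hih hdz_i
    have hrz_f4 : O.r z ≤ f4 :=
      hf4.2.2.2 _ (O.isId_r z) (hrz_e.trans heg)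
        (by rw [hrq]; exact O.r_le_r hzc)
    have hzz' : z ≤ z' := O.le_corest hzc hf4Id hf4c hrz_f4
    -- z' ≤ z
    have hz'h : z' ≤ h := hz'.trans hc
    have hrz'_e : O.r z' ≤ e :=
      he.2.2.2 _ (O.isId_r z') (by rw [hrz']; exact hf4g) (O.r_le_r hz'h)
    have hz'b : z' ≤ b := O.le_corest hz'h heId heh hrz'_e
    have hdz'_f : O.d z' ≤ f :=
      hf.2.2.2 _ (O.isId_d z') (by rw [hdp]; exact O.d_le_d hz'b)
        ((O.d_le_d hz').trans (hdc.le.trans hik))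
    have hz'z : z' ≤ z := O.le_rest hz'b hfId hfdb hdz'_f
    have hzz : z = z' := le_antisymm hzz' hz'z
    -- compute the left-hand side
    have hL1 : O.rest (O.mul a b) f = O.mul (O.rest a (O.r z)) z := by
      rw [O.rest_mul hcab hfId hfdb, ← hzdef]
    have hrza : O.r z ≤ O.d a := by rw [hda]; exact hrz_e
    have hL2 : O.rest a (O.r z) = O.rest g (O.r z) :=
      O.rest_of_le ha (O.isId_r z) hrza
    have hLHS : O.pseudo (O.pseudo g h e) k f
        = O.mul (O.mul (O.rest g (O.r z)) z) (O.corest f k) := by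
      show O.mul (O.rest (O.mul a b) f) (O.corest f k) = _
      rw [hL1, hL2]
    -- compute the right-hand side
    have hR1 : O.corest f4 (O.mul c dk) = O.mul z' (O.corest (O.d z') dk) := by
      rw [O.corest_mul hccdk hf4Id hf4c, ← hz'def]
    have hdz'i : O.d z' ≤ i := (O.d_le_d hz').trans hdc.le
    have hR2 : O.corest (O.d z') dk = O.corest (O.d z') k :=
      O.corest_of_le hdk (O.isId_d z') (by rw [hrdk]; exact hdz'i)
    have hRHS : O.pseudo g (O.pseudo h k i) f4
        = O.mul (O.rest g f4) (O.mul z' (O.corest (O.d z') k)) := by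
      show O.mul (O.rest g f4) (O.corest f4 (O.mul c dk)) = _
      rw [hR1, hR2]
    rw [← hzz] at hrz'
    rw [hLHS, hRHS, ← hzz, ← hrz', ← hdz]
    have hdzk : O.d z ≤ O.r k := by rw [hdz]; exact hfk
    have compXZ : O.comp (O.rest g (O.r z)) z :=
      O.comp_of (O.rest_d g (O.r z) (O.isId_r z) (hrz_e.trans heg))
    have compZW : O.comp z (O.corest (O.d z) k) :=
      O.comp_of (O.corest_r (O.d z) k (O.isId_d z) hdzk).symm
    exact O.assoc _ _ _ compXZ compZW
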